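/- There exists a class of infinite binary sequences in Sigma^0_1[Pi^0_1] that is not Pi^0_2. -/

import Mathlib

open Filter Topology

abbrev Cantor := ℕ → Bool

/-- The length-`n` prefix of an infinite binary sequence, as a list. -/
def pref (X : ℕ → Bool) (n : ℕ) : List Bool := (List.range n).map X

/-- A predicate is computably enumerable (c.e., Σ⁰₁). -/
def CEPred {α : Type} [Primcodable α] (P : α → Prop) : Prop :=
  ∃ f : α →. Unit, Partrec f ∧ ∀ a, P a ↔ (f a).Dom

/-- A predicate (of the outer quantified numbers together with a finite prefix
of the sequence) is Δ⁰₁, i.e. computable. -/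
def DeltaPred (P : List ℕ → List Bool → Prop) : Prop :=
  ComputablePred fun p : List ℕ × List Bool => P p.1 p.2

/-- A predicate is Π⁰₁, i.e. co-computably enumerable. -/
def PiPred (P : List ℕ → List Bool → Prop) : Prop :=
  CEPred fun p : List ℕ × List Bool => ¬ P p.1 p.2

/-- `AltQ n b P ks A`: `n` alternating quantifiers (starting with `∃` if `b`,
with `∀` otherwise) applied to the predicate `P`, where the innermost
quantified variable is the length of the prefix of `A` handed to `P`, and `ks`
accumulates the previously quantified numbers. -/
def AltQ : ℕ → Bool → (List ℕ → List Bool → Prop) → List ℕ → Cantor → Prop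
  | 0, _, P, ks, _ => P ks []
  | 1, true, P, ks, A => ∃ k, P ks (pref A k)
  | 1, false, P, ks, A => ∀ k, P ks (pref A k)
  | n+2, true, P, ks, A => ∃ k, AltQ (n+1) false P (ks ++ [k]) A
  | n+2, false, P, ks, A => ∀ k, AltQ (n+1) true P (ks ++ [k]) A

/-- `X ∈ Σ⁰ₙ[C]`: definable with `n` alternating quantifiers starting with
`∃`, over some predicate in the class `C`. -/
def SigmaIn (n : ℕ) (C : (List ℕ → List Bool → Prop) → Prop) (X : Set Cantor) : Prop :=
  ∃ P, C P ∧ ∀ A : Cantor, A ∈ X ↔ AltQ n true P [] A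

/-- `X ∈ Π⁰ₙ[C]`: definable with `n` alternating quantifiers starting with
`∀`, over some predicate in the class `C`. -/
def PiIn (n : ℕ) (C : (List ℕ → List Bool → Prop) → Prop) (X : Set Cantor) : Prop :=
  ∃ P, C P ∧ ∀ A : Cantor, A ∈ X ↔ AltQ n false P [] A

/-!
A sequence `0^N 1^∞` has a prefix witnessing divergence iff the `N`-th partial computable
function is not total, and divergence on a given input is Π⁰₁; this gives a Σ⁰₁[Π⁰₁] class.
If the class were `{A | ∀ n, ∃ m, R n (A↾m)}`, the property `∀ n, ∃ m, R n ((0^N 1^∞)↾m)`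
of `N` would be the totality of a function partial computable uniformly in `N`. By the
recursion theorem some code `e` is total exactly when this holds for `N = e`, i.e. exactly
when `0^e 1^∞` lies in the class, i.e. exactly when `e` is not total.
-/

open Nat.Partrec (Code)
open Nat.Partrec.Code Encodable Denumerable

section CEPred

variable {α β : Type} [Primcodable α] [Primcodable β]

theorem CEPred.comp {p : β → Prop} (hp : CEPred p) {g : α → β} (hg : Computable g) :
    CEPred fun a => p (g a) :=
  let ⟨f, hf, hpf⟩ := hp
  ⟨fun a => f (g a), hf.comp hg, fun a => hpf (g a)⟩

theorem Partrec.cePred_true_mem {f : α →. Bool} (hf : Partrec f) :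
    CEPred fun a => true ∈ f a := by
  refine ⟨fun a => (f a).bind fun b => _root_.cond b (Part.some ()) Part.none,
    hf.bind (Partrec.cond Computable.snd (Partrec.const' _) Partrec.none).to₂, fun a => ?_⟩
  simp [Part.dom_iff_mem]

theorem CEPred.exists {p : α × ℕ → Prop} (hp : CEPred p) : CEPred fun a => ∃ n, p (a, n) := by
  obtain ⟨f, hf, hpf⟩ := hp
  obtain ⟨c, hc⟩ := exists_code.1 (Partrec.bind_decode₂_iff.1 hf)
  have hdom : ∀ q, p q ↔ ∃ s y, y ∈ evaln s c (encode q) := fun q => by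
    have hcq : c.eval (encode q) = (f q).map encode := by simp [hc]
    rw [hpf, show (f q).Dom ↔ (c.eval (encode q)).Dom by rw [hcq]; rfl, Part.dom_iff_mem]
    simp only [evaln_complete]
    exact exists_comm
  -- search over `t = ⟪s, n⟫` for a halting computation of `f (a, n)` within `s` steps
  refine ⟨fun a => (Nat.rfindOpt fun t => evaln t.unpair.1 c (encode (a, t.unpair.2))).map
    fun _ => (), ?_, fun a => ?_⟩
  · refine (Partrec.rfindOpt (Primrec₂.to_comp ?_)).map (Computable.const ()).to₂
    exact primrec_evaln.comp (((Primrec.fst.comp (Primrec.unpair.comp Primrec.snd)).pair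
      (Primrec.const c)).pair (Primrec.encode.comp (Primrec.fst.pair
        (Primrec.snd.comp (Primrec.unpair.comp Primrec.snd)))))
  · change _ ↔ (Nat.rfindOpt _).Dom
    simp only [hdom, Nat.rfindOpt_dom]
    constructor
    · rintro ⟨n, s, y, h⟩
      exact ⟨Nat.pair s n, y, by simpa using h⟩
    · rintro ⟨t, y, h⟩
      exact ⟨_, _, y, h⟩

theorem exists_code_eval_dom_iff {p : Code × ℕ → Prop} (hp : CEPred p) :
    ∃ e : Code, ∀ x, (e.eval x).Dom ↔ p (e, x) := by
  obtain ⟨f, hf, hpf⟩ := hp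
  obtain ⟨e, he⟩ := fixed_point₂ (f := fun c x => (f (c, x)).map fun _ => 0)
    (hf.map (Computable.const 0).to₂)
  exact ⟨e, fun x => by rw [he, hpf]; rfl⟩

end CEPred

def zerosThenOnes (N : ℕ) : Cantor := fun i => decide (N ≤ i)

/-- The string `0^N 1^(j+1)`, with `N` read off as the position of its first `1`, witnesses
that the `N`-th code diverges on input `j`. -/
def WitnessesDivergence (σ : List Bool) : Prop :=
  σ.idxOf true < σ.length ∧
    ¬((ofNat Code (σ.idxOf true)).eval (σ.length - σ.idxOf true - 1)).Dom

def divergenceClass : Set Cantor := {A | ∃ k, WitnessesDivergence (pref A k)}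

@[simp]
theorem length_pref (A : Cantor) (k : ℕ) : (pref A k).length = k := by
  simp [pref]

theorem true_mem_pref_zerosThenOnes_iff (N k : ℕ) :
    true ∈ pref (zerosThenOnes N) k ↔ N < k := by
  simp only [pref, zerosThenOnes, List.mem_map, List.mem_range, decide_eq_true_eq]
  exact ⟨fun ⟨i, hik, hNi⟩ => lt_of_le_of_lt hNi hik, fun h => ⟨N, h, le_rfl⟩⟩

theorem idxOf_true_pref_zerosThenOnes (N k : ℕ) :
    (pref (zerosThenOnes N) k).idxOf true = min N k := by
  induction k with
  | zero => simp [pref]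
  | succ k ih =>
    have hsucc :
        pref (zerosThenOnes N) (k + 1) = pref (zerosThenOnes N) k ++ [decide (N ≤ k)] := by
      simp [pref, List.range_succ, zerosThenOnes]
    rw [hsucc]
    by_cases hNk : N < k
    · rw [List.idxOf_append_of_mem ((true_mem_pref_zerosThenOnes_iff N k).2 hNk), ih]
      omega
    · rw [List.idxOf_append_of_notMem (mt (true_mem_pref_zerosThenOnes_iff N k).1 hNk),
        length_pref]
      by_cases hN : N = k
      · subst hN; simp
      · have : ¬N ≤ k := by omega
        simp [this]; omega

theorem zerosThenOnes_mem_divergenceClass_iff (c : Code) :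
    zerosThenOnes (encode c) ∈ divergenceClass ↔ ∃ j, ¬(c.eval j).Dom := by
  simp only [divergenceClass, Set.mem_ofPred_eq, WitnessesDivergence, length_pref,
    idxOf_true_pref_zerosThenOnes]
  constructor
  · rintro ⟨k, hk, hdiv⟩
    rw [min_eq_left (by omega), ofNat_encode] at hdiv
    exact ⟨_, hdiv⟩
  · rintro ⟨j, hj⟩
    refine ⟨encode c + j + 1, ?_⟩
    rw [min_eq_left (by omega), ofNat_encode, show encode c + j + 1 - encode c - 1 = j by omega]
    exact ⟨by omega, hj⟩

theorem piPred_witnessesDivergence : PiPred fun _ σ => WitnessesDivergence σ := by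
  refine CEPred.comp (p := fun σ => ¬WitnessesDivergence σ) ?_ Computable.snd
  refine ⟨fun σ => cond (decide (σ.length ≤ σ.idxOf true)) (Part.some ())
      (((ofNat Code (σ.idxOf true)).eval (σ.length - σ.idxOf true - 1)).map fun _ => ()),
    ?_, fun σ => ?_⟩
  · have hidx : Primrec fun σ : List Bool => σ.idxOf true :=
      Primrec.list_idxOf.comp (Primrec.const true) Primrec.id
    exact Partrec.cond (Primrec.nat_le.comp Primrec.list_length hidx).decide.to_comp
      (Partrec.const' _)
      ((eval_part.comp ((Computable.ofNat Code).comp hidx.to_comp)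
        (Primrec.nat_sub.comp (Primrec.nat_sub.comp Primrec.list_length hidx)
          (Primrec.const 1)).to_comp).map (Computable.const ()).to₂)
  · by_cases h : σ.length ≤ σ.idxOf true
    · simp [WitnessesDivergence, h]
    · have hlt : σ.idxOf true < σ.length := Nat.lt_of_not_le h
      simp only [WitnessesDivergence, hlt, true_and, not_not, h, decide_false, cond_false]
      rfl

theorem sigmaIn_one_piPred_divergenceClass : SigmaIn 1 PiPred divergenceClass :=
  ⟨_, piPred_witnessesDivergence, fun _ => Iff.rfl⟩

theorem primrec₂_pref_zerosThenOnes : Primrec₂ fun N k => pref (zerosThenOnes N) k :=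
  Primrec.list_map (Primrec.list_range.comp Primrec.snd)
    (Primrec.nat_le.comp (Primrec.fst.comp Primrec.fst) Primrec.snd).decide.to₂

/-- There is a Σ⁰₁[Π⁰₁] class of infinite binary sequences that is not Π⁰₂,
even for Π⁰₂ definitions `{A | ∀ n, ∃ m, R n (A↾m) = true}` with a partial
computable predicate `R`. -/
theorem exists_Sigma01_Pi01_not_Pi02 :
    ∃ X : Set Cantor, SigmaIn 1 PiPred X ∧
      ¬ ∃ R : ℕ → List Bool →. Bool, Partrec₂ R ∧
          ∀ A : Cantor, A ∈ X ↔ ∀ n : ℕ, ∃ m : ℕ, true ∈ R n (pref A m) := by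
  refine ⟨divergenceClass, sigmaIn_one_piPred_divergenceClass, ?_⟩
  rintro ⟨R, hR, hX⟩
  have hce : CEPred fun q : Code × ℕ =>
      ∃ k, true ∈ R q.2 (pref (zerosThenOnes (encode q.1)) k) :=
    CEPred.exists (hR.comp (Computable.snd.comp Computable.fst)
      (primrec₂_pref_zerosThenOnes.to_comp.comp
        (Computable.encode.comp (Computable.fst.comp Computable.fst))
        Computable.snd)).cePred_true_mem
  obtain ⟨e, he⟩ := exists_code_eval_dom_iff hce
  have h := zerosThenOnes_mem_divergenceClass_iff e
  simp only [hX, he] at h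
  exact iff_not_self (h.trans not_forall.symm)
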